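/- arXiv:quant-ph/0511244 — 6 statements merged into one kernel-verified Lean document; each statement's English description precedes it below -/
import Mathlib

section
/- Let Φ(ρ) = ∑_α K_α ρ K_α* be a completely positive map on M_d(ℂ) admitting a Kraus decomposition with rank(K_α) ≤ r for all α. Then for every positive semidefinite ρ ∈ M_d ⊗ M_d with Schmidt number at most s, the state (id ⊗ Φ)(ρ) has Schmidt number at most min(r, s). In particular Φ is r-partially entanglement breaking: (id ⊗ Φ)(ρ) has Schmidt number at most r for every state ρ. -/
open Matrix Kronecker BigOperators
open scoped ComplexOrder

/-- ψ ∈ ℂ^d ⊗ ℂ^d (modeled on `Fin d × Fin d`) has Schmidt rank at most k: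
it is a sum of k simple tensors. -/
def schmidtRankLE (d k : ℕ) (ψ : Fin d × Fin d → ℂ) : Prop :=
  ∃ u v : Fin k → Fin d → ℂ, ψ = fun p => ∑ t, u t p.1 * v t p.2

/-- A positive semidefinite ρ on ℂ^d ⊗ ℂ^d has Schmidt number at most k:
it is a nonnegative combination of projectors onto vectors of Schmidt rank ≤ k. -/
def hasSchmidtNumberLE (d k : ℕ) (ρ : Matrix (Fin d × Fin d) (Fin d × Fin d) ℂ) : Prop :=
  ∃ (n : ℕ) (c : Fin n → ℝ) (ψ : Fin n → (Fin d × Fin d → ℂ)),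
    (∀ m, 0 ≤ c m) ∧ (∀ m, schmidtRankLE d k (ψ m)) ∧
    ρ = ∑ m, (c m : ℂ) • Matrix.vecMulVec (ψ m) (star (ψ m))

/-!
A pure state of Schmidt rank at most `k` is, viewed as a `d × d` matrix, a product of a `d × k`
and a `k × d` matrix, and `1 ⊗ K` acts on that matrix by right multiplication with `Kᵀ`. Hence
`(1 ⊗ K) ψ` keeps the inner dimension of any such factorization of `ψ`, and when `rank K ≤ r`
a rank factorization `Kᵀ = B C` through `r` exhibits Schmidt rank at most `r`. Each Kraus term
maps a decomposition of `ρ` into pure states to one of the output, and the terms are summed.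
-/

theorem Matrix.exists_mul_eq_of_rank_le {K m n : Type*} [Field K] [Finite m] [Fintype n]
    {r : ℕ} (A : Matrix m n K) (hA : A.rank ≤ r) :
    ∃ (B : Matrix m (Fin r) K) (C : Matrix (Fin r) n K), A = B * C := by
  classical
  obtain ⟨f, hf⟩ := finrank_le_iff_exists_linearMap.mp
    (hA.trans_eq (Module.finrank_fin_fun K).symm :
      Module.finrank K (LinearMap.range A.mulVecLin) ≤ Module.finrank K (Fin r → K))
  obtain ⟨g, hgf⟩ := f.exists_leftInverse_of_injective (LinearMap.ker_eq_bot.mpr hf)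
  refine ⟨LinearMap.toMatrix' ((LinearMap.range A.mulVecLin).subtype ∘ₗ g),
    LinearMap.toMatrix' (f ∘ₗ A.mulVecLin.rangeRestrict), ?_⟩
  rw [← LinearMap.toMatrix'_comp, LinearMap.comp_assoc, ← LinearMap.comp_assoc _ f g, hgf,
    LinearMap.id_comp, LinearMap.rangeRestrict, LinearMap.subtype_comp_codRestrict,
    ← Matrix.toLin'_apply', LinearMap.toMatrix'_toLin']

theorem schmidtRankLE_iff_exists_mul {d k : ℕ} {ψ : Fin d × Fin d → ℂ} :
    schmidtRankLE d k ψ ↔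
      ∃ (U : Matrix (Fin d) (Fin k) ℂ) (V : Matrix (Fin k) (Fin d) ℂ),
        of (Function.curry ψ) = U * V := by
  constructor
  · rintro ⟨u, v, rfl⟩
    exact ⟨(of u)ᵀ, of v, by ext i j; simp [mul_apply]⟩
  · rintro ⟨U, V, hUV⟩
    refine ⟨Uᵀ, V, funext fun p => ?_⟩
    simpa [mul_apply] using congrFun₂ hUV p.1 p.2

theorem curry_one_kronecker_mulVec {d : ℕ} (K : Matrix (Fin d) (Fin d) ℂ)
    (ψ : Fin d × Fin d → ℂ) :
    of (Function.curry (((1 : Matrix (Fin d) (Fin d) ℂ) ⊗ₖ K) *ᵥ ψ)) =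
      of (Function.curry ψ) * Kᵀ := by
  ext i j
  simp [mulVec, dotProduct, Fintype.sum_prod_type, one_apply, mul_apply, mul_comm]

theorem hasSchmidtNumberLE_zero (d k : ℕ) : hasSchmidtNumberLE d k 0 :=
  ⟨0, Fin.elim0, Fin.elim0, fun m => m.elim0, fun m => m.elim0, by simp⟩

theorem hasSchmidtNumberLE.add {d k : ℕ} {ρ σ : Matrix (Fin d × Fin d) (Fin d × Fin d) ℂ}
    (hρ : hasSchmidtNumberLE d k ρ) (hσ : hasSchmidtNumberLE d k σ) :
    hasSchmidtNumberLE d k (ρ + σ) := by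
  obtain ⟨n, c, ψ, hc, hψ, rfl⟩ := hρ
  obtain ⟨n', c', ψ', hc', hψ', rfl⟩ := hσ
  refine ⟨n + n', Fin.append c c', Fin.append ψ ψ',
    Fin.addCases (by simpa using hc) (by simpa using hc'),
    Fin.addCases (by simpa using hψ) (by simpa using hψ'), ?_⟩
  simp only [Fin.sum_univ_add, Fin.append_left, Fin.append_right]

theorem hasSchmidtNumberLE_sum {d k : ℕ} {ι : Type*} (s : Finset ι)
    {ρ : ι → Matrix (Fin d × Fin d) (Fin d × Fin d) ℂ}
    (h : ∀ i ∈ s, hasSchmidtNumberLE d k (ρ i)) :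
    hasSchmidtNumberLE d k (∑ i ∈ s, ρ i) := by
  classical
  induction s using Finset.induction_on with
  | empty => simpa using hasSchmidtNumberLE_zero d k
  | insert i s hi ih =>
    rw [Finset.sum_insert hi]
    exact (h i (s.mem_insert_self i)).add (ih fun j hj => h j (Finset.mem_insert_of_mem hj))

theorem hasSchmidtNumberLE.mul_mul_conjTranspose {d k l : ℕ}
    {ρ : Matrix (Fin d × Fin d) (Fin d × Fin d) ℂ} (M : Matrix (Fin d × Fin d) (Fin d × Fin d) ℂ)
    (hM : ∀ ψ, schmidtRankLE d k ψ → schmidtRankLE d l (M *ᵥ ψ))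
    (hρ : hasSchmidtNumberLE d k ρ) :
    hasSchmidtNumberLE d l (M * ρ * Mᴴ) := by
  obtain ⟨n, c, ψ, hc, hψ, rfl⟩ := hρ
  refine ⟨n, c, fun m => M *ᵥ ψ m, hc, fun m => hM _ (hψ m), ?_⟩
  simp only [Matrix.mul_sum, Matrix.sum_mul, Matrix.mul_smul, Matrix.smul_mul, mul_vecMulVec,
    vecMulVec_mul, star_mulVec]

theorem schmidtRankLE.one_kronecker_mulVec {d k : ℕ} {ψ : Fin d × Fin d → ℂ}
    (K : Matrix (Fin d) (Fin d) ℂ) (hψ : schmidtRankLE d k ψ) :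
    schmidtRankLE d k (((1 : Matrix (Fin d) (Fin d) ℂ) ⊗ₖ K) *ᵥ ψ) := by
  obtain ⟨U, V, hUV⟩ := schmidtRankLE_iff_exists_mul.mp hψ
  exact schmidtRankLE_iff_exists_mul.mpr
    ⟨U, V * Kᵀ, by rw [curry_one_kronecker_mulVec, hUV, Matrix.mul_assoc]⟩

theorem schmidtRankLE_one_kronecker_mulVec_of_rank_le {d r : ℕ} {K : Matrix (Fin d) (Fin d) ℂ}
    (hK : K.rank ≤ r) (ψ : Fin d × Fin d → ℂ) :
    schmidtRankLE d r (((1 : Matrix (Fin d) (Fin d) ℂ) ⊗ₖ K) *ᵥ ψ) := by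
  obtain ⟨B, C, hBC⟩ := Kᵀ.exists_mul_eq_of_rank_le ((rank_transpose K).trans_le hK)
  exact schmidtRankLE_iff_exists_mul.mpr
    ⟨of (Function.curry ψ) * B, C, by rw [curry_one_kronecker_mulVec, hBC, Matrix.mul_assoc]⟩

theorem pebt_of_kraus_rank_le_general (d r s : ℕ) {ι : Type} [Fintype ι]
    (K : ι → Matrix (Fin d) (Fin d) ℂ) (hK : ∀ α, (K α).rank ≤ r)
    (ρ : Matrix (Fin d × Fin d) (Fin d × Fin d) ℂ)
    (hs : hasSchmidtNumberLE d s ρ) :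
    hasSchmidtNumberLE d (min r s)
      (∑ α, ((1 : Matrix (Fin d) (Fin d) ℂ) ⊗ₖ K α) * ρ *
        (((1 : Matrix (Fin d) (Fin d) ℂ) ⊗ₖ K α))ᴴ) := by
  refine hasSchmidtNumberLE_sum _ fun α _ => hs.mul_mul_conjTranspose _ fun ψ hψ => ?_
  rcases le_total r s with hrs | hsr
  · rw [min_eq_left hrs]
    exact schmidtRankLE_one_kronecker_mulVec_of_rank_le (hK α) ψ
  · rw [min_eq_right hsr]
    exact hψ.one_kronecker_mulVec (K α)

/-- if Φ(ρ) = ∑_α K_α ρ K_α* with rank K_α ≤ r for all α, then for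
every positive semidefinite ρ on ℂ^d ⊗ ℂ^d of Schmidt number ≤ s, the output
(id ⊗ Φ)(ρ) = ∑_α (1 ⊗ K_α) ρ (1 ⊗ K_α)* has Schmidt number at most min r s. -/
theorem pebt_of_kraus_rank_le (d r s : ℕ) {ι : Type} [Fintype ι]
    (K : ι → Matrix (Fin d) (Fin d) ℂ) (hK : ∀ α, (K α).rank ≤ r)
    (ρ : Matrix (Fin d × Fin d) (Fin d × Fin d) ℂ) (hρ : ρ.PosSemidef)
    (hs : hasSchmidtNumberLE d s ρ) :
    hasSchmidtNumberLE d (min r s)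
      (∑ α, ((1 : Matrix (Fin d) (Fin d) ℂ) ⊗ₖ K α) * ρ *
        (((1 : Matrix (Fin d) (Fin d) ℂ) ⊗ₖ K α))ᴴ) :=
  pebt_of_kraus_rank_le_general d r s K hK ρ hs
end

section
/- A completely positive trace-preserving map Φ on M_d(ℂ) has Choi matrix (id ⊗ Φ)(P⁺_d) of Schmidt number at most r if and only if Φ admits a Kraus decomposition Φ(ρ) = ∑_α K_α ρ K_α* in which every Kraus operator K_α has rank at most r. -/
open Matrix Kronecker BigOperators
open scoped ComplexOrder

/-- The ampliation id_n ⊗ Λ of a map Λ on M_d, acting blockwise on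
M_n ⊗ M_d ≅ M_{nd}. -/
def idTensor (n d : ℕ) (Λ : Matrix (Fin d) (Fin d) ℂ → Matrix (Fin d) (Fin d) ℂ)
    (σ : Matrix (Fin n × Fin d) (Fin n × Fin d) ℂ) :
    Matrix (Fin n × Fin d) (Fin n × Fin d) ℂ :=
  Matrix.of fun p q => Λ (Matrix.of fun i j => σ (p.1, i) (q.1, j)) p.2 q.2

/-- Complete positivity: every ampliation id_n ⊗ Φ preserves positive
semidefiniteness. -/
def CompletelyPositive (d : ℕ)
    (Φ : Matrix (Fin d) (Fin d) ℂ →ₗ[ℂ] Matrix (Fin d) (Fin d) ℂ) : Prop :=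
  ∀ n : ℕ, ∀ σ : Matrix (Fin n × Fin d) (Fin n × Fin d) ℂ,
    σ.PosSemidef → (idTensor n d (fun M => Φ M) σ).PosSemidef

/-- The maximally entangled projector P⁺_d, with entries
P⁺ ((i,k),(j,l)) = δ_{ik} δ_{jl} / d. -/
noncomputable def Pplus (d : ℕ) : Matrix (Fin d × Fin d) (Fin d × Fin d) ℂ :=
  Matrix.vecMulVec (fun p => if p.1 = p.2 then ((Real.sqrt d : ℂ))⁻¹ else 0)
    (star fun p : Fin d × Fin d => if p.1 = p.2 then ((Real.sqrt d : ℂ))⁻¹ else 0)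
/-!
The Choi matrix of `ρ ↦ K ρ K*` is `d⁻¹ |vec K⟩⟨vec K|`, and the Schmidt rank of `vec K` is the
rank of `K`, since a Schmidt decomposition of `vec K` with `r` terms is a factorisation of `K`
through `ℂ^r`. As the Choi matrix determines the map, decompositions of the Choi matrix into
(weighted) pure states are exactly Kraus decompositions, the weights being absorbed into the
Kraus operators.
-/

open Module in
theorem LinearMap.exists_comp_eq_of_finrank_range_le {K V W : Type*} [Field K]
    [AddCommGroup V] [Module K V] [AddCommGroup W] [Module K W]
    (f : V →ₗ[K] W) [FiniteDimensional K (range f)] {r : ℕ} (hr : finrank K (range f) ≤ r) :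
    ∃ (g : (Fin r → K) →ₗ[K] W) (h : V →ₗ[K] Fin r → K), g ∘ₗ h = f := by
  let e := (finBasis K (range f)).equivFun
  let restrict : (Fin r → K) →ₗ[K] Fin (finrank K (range f)) → K :=
    funLeft K K (Fin.castLE hr)
  obtain ⟨pad, hpad⟩ := restrict.exists_rightInverse_of_surjective
    (range_eq_top.2 (funLeft_surjective_of_injective K K _ (Fin.castLE_injective hr)))
  refine ⟨(range f).subtype ∘ₗ e.symm.toLinearMap ∘ₗ restrict,
    pad ∘ₗ e.toLinearMap ∘ₗ f.rangeRestrict, ?_⟩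
  ext v
  simp [← LinearMap.comp_apply restrict pad, hpad]

theorem Matrix.rank_le_iff_exists_eq_mul {K m n : Type*} [Field K] [Fintype m] [Fintype n]
    (A : Matrix m n K) {r : ℕ} :
    A.rank ≤ r ↔ ∃ (B : Matrix m (Fin r) K) (C : Matrix (Fin r) n K), A = B * C := by
  classical
  constructor
  · intro hA
    obtain ⟨g, h, hgh⟩ := A.mulVecLin.exists_comp_eq_of_finrank_range_le hA
    refine ⟨LinearMap.toMatrix' g, LinearMap.toMatrix' h, ?_⟩
    rw [← LinearMap.toMatrix'_comp, hgh, ← Matrix.toLin'_apply', LinearMap.toMatrix'_toLin']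
  · rintro ⟨B, C, rfl⟩
    exact (rank_mul_le_left B C).trans ((rank_le_card_width B).trans (Fintype.card_fin r).le)

theorem Matrix.mul_single_one_mul_apply {l m n o α : Type*} [Fintype m] [Fintype n]
    [DecidableEq m] [DecidableEq n] [NonAssocSemiring α]
    (A : Matrix l m α) (B : Matrix n o α) (i : m) (j : n) (k : l) (p : o) :
    (A * single i j (1 : α) * B) k p = A k i * B j p := by
  simp [mul_apply, single_apply, ite_and, Finset.sum_ite_eq]

section Choi

variable {ι m n R : Type*} [Fintype ι] [Fintype m] [CommSemiring R]

def krausMap [StarRing R] (K : ι → Matrix n m R) : Matrix m m R →ₗ[R] Matrix n n R where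
  toFun ρ := ∑ α, K α * ρ * (K α)ᴴ
  map_add' ρ σ := by simp only [Matrix.mul_add, Matrix.add_mul, Finset.sum_add_distrib]
  map_smul' c ρ := by
    simp only [Matrix.mul_smul, Matrix.smul_mul, Finset.smul_sum, RingHom.id_apply]

theorem krausMap_apply [StarRing R] (K : ι → Matrix n m R) (ρ : Matrix m m R) :
    krausMap K ρ = ∑ α, K α * ρ * (K α)ᴴ := rfl

variable [DecidableEq m]

def choiMatrix (Φ : Matrix m m R →ₗ[R] Matrix n n R) : Matrix (m × n) (m × n) R :=
  of fun p q => Φ (single p.1 q.1 1) p.2 q.2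

theorem choiMatrix_injective :
    Function.Injective (choiMatrix : (Matrix m m R →ₗ[R] Matrix n n R) → _) := by
  intro Φ Ψ h
  apply Matrix.ext_linearMap
  intro i j
  ext k l
  exact congrFun₂ h (i, k) (j, l)

theorem choiMatrix_krausMap [StarRing R] (K : ι → Matrix n m R) :
    choiMatrix (krausMap K) = ∑ α, vecMulVec (K α).vec (star (K α).vec) := by
  ext ⟨i, k⟩ ⟨j, l⟩
  simp [choiMatrix, krausMap_apply, Matrix.sum_apply, Matrix.mul_single_one_mul_apply, vec,
    vecMulVec_apply]

end Choi

theorem schmidtRankLE_vec_iff {d k : ℕ} (K : Matrix (Fin d) (Fin d) ℂ) :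
    schmidtRankLE d k K.vec ↔ K.rank ≤ k := by
  rw [Matrix.rank_le_iff_exists_eq_mul]
  constructor
  · rintro ⟨u, v, huv⟩
    refine ⟨(of v)ᵀ, of u, ?_⟩
    ext k i
    simpa [mul_apply, mul_comm] using congrFun huv (i, k)
  · rintro ⟨B, C, rfl⟩
    refine ⟨fun t i => C t i, fun t k => B k t, ?_⟩
    ext ⟨i, k⟩
    simp [vec, mul_apply, mul_comm]

theorem schmidtRankLE.smul {d k : ℕ} {ψ : Fin d × Fin d → ℂ} (hψ : schmidtRankLE d k ψ) (a : ℂ) :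
    schmidtRankLE d k (a • ψ) := by
  obtain ⟨u, v, rfl⟩ := hψ
  exact ⟨a • u, v, by ext; simp [Finset.mul_sum, mul_assoc]⟩

theorem hasSchmidtNumberLE_smul_iff {d k : ℕ} {s : ℝ} (hs : 0 < s)
    (C : Matrix (Fin d × Fin d) (Fin d × Fin d) ℂ) :
    hasSchmidtNumberLE d k ((s : ℂ) • C) ↔ ∃ (n : ℕ) (ψ : Fin n → Fin d × Fin d → ℂ),
      (∀ m, schmidtRankLE d k (ψ m)) ∧ C = ∑ m, vecMulVec (ψ m) (star (ψ m)) := by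
  constructor
  · rintro ⟨n, c, ψ, hc, hψ, hC⟩
    refine ⟨n, fun m => (√(c m / s) : ℂ) • ψ m, fun m => (hψ m).smul _, ?_⟩
    have hweight : ∀ m, star (√(c m / s) : ℂ) * (√(c m / s) : ℂ) = (s : ℂ)⁻¹ * c m := by
      intro m
      rw [Complex.star_def, Complex.conj_ofReal, ← Complex.ofReal_mul,
        Real.mul_self_sqrt (div_nonneg (hc m) hs.le)]
      push_cast
      ring
    calc C = (s : ℂ)⁻¹ • ((s : ℂ) • C) := by
            rw [inv_smul_smul₀ (Complex.ofReal_ne_zero.2 hs.ne')]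
      _ = _ := by
            simp only [hC, Finset.smul_sum, star_smul, smul_vecMulVec, vecMulVec_smul, smul_smul,
              hweight]
  · rintro ⟨n, ψ, hψ, rfl⟩
    exact ⟨n, fun _ => s, ψ, fun _ => hs.le, hψ, Finset.smul_sum⟩

theorem Pplus_block_eq_smul_single (d : ℕ) (i j : Fin d) :
    of (fun a b => Pplus d (i, a) (j, b)) = (d : ℂ)⁻¹ • single i j 1 := by
  have hsqrt : (Real.sqrt d : ℂ)⁻¹ * (Real.sqrt d : ℂ)⁻¹ = (d : ℂ)⁻¹ := by
    rw [← mul_inv, ← Complex.ofReal_mul, Real.mul_self_sqrt (Nat.cast_nonneg d)]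
    simp
  ext a b
  simp only [of_apply, Pplus, vecMulVec_apply, Pi.star_apply, Matrix.smul_apply, single,
    smul_eq_mul]
  by_cases h1 : i = a <;> by_cases h2 : j = b <;>
    simp [h1, h2, star_inv₀, ← Complex.ofReal_natCast, Complex.conj_ofReal, hsqrt]

theorem idTensor_Pplus (d : ℕ) (Φ : Matrix (Fin d) (Fin d) ℂ →ₗ[ℂ] Matrix (Fin d) (Fin d) ℂ) :
    idTensor d d (fun M => Φ M) (Pplus d) = (d : ℂ)⁻¹ • choiMatrix Φ := by
  ext ⟨i, k⟩ ⟨j, l⟩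
  change Φ (of fun a b => Pplus d (i, a) (j, b)) k l = _
  rw [Pplus_block_eq_smul_single, map_smul]
  rfl

theorem choi_schmidtNumber_iff_kraus_rank_general (d r : ℕ)
    (Φ : Matrix (Fin d) (Fin d) ℂ →ₗ[ℂ] Matrix (Fin d) (Fin d) ℂ) :
    hasSchmidtNumberLE d r (idTensor d d (fun M => Φ M) (Pplus d)) ↔
    ∃ (n : ℕ) (K : Fin n → Matrix (Fin d) (Fin d) ℂ),
      (∀ α, (K α).rank ≤ r) ∧ ∀ ρ, Φ ρ = ∑ α, K α * ρ * (K α)ᴴ := by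
  rcases d.eq_zero_or_pos with rfl | hd
  · exact iff_of_true ⟨0, 0, 0, finZeroElim, finZeroElim, Subsingleton.elim _ _⟩
      ⟨0, finZeroElim, finZeroElim, fun _ => Subsingleton.elim _ _⟩
  have hkraus : ∀ {n} (K : Fin n → Matrix (Fin d) (Fin d) ℂ),
      (∀ ρ, Φ ρ = ∑ α, K α * ρ * (K α)ᴴ) ↔
        choiMatrix Φ = ∑ α, vecMulVec (K α).vec (star (K α).vec) := fun K => by
    rw [← choiMatrix_krausMap, choiMatrix_injective.eq_iff, LinearMap.ext_iff]
    rfl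
  rw [idTensor_Pplus, ← Complex.ofReal_natCast, ← Complex.ofReal_inv,
    hasSchmidtNumberLE_smul_iff (by positivity)]
  refine exists_congr fun n => ?_
  rw [(vec_bijective.surjective.comp_left (α := Fin n)).exists]
  simp only [Function.comp_apply, schmidtRankLE_vec_iff, hkraus]

/-- a CPT map Φ on M_d has Choi matrix (id ⊗ Φ)(P⁺_d) of Schmidt
number at most r iff Φ admits a Kraus decomposition with all Kraus operators of
rank at most r. -/
theorem choi_schmidtNumber_iff_kraus_rank (d r : ℕ)
    (Φ : Matrix (Fin d) (Fin d) ℂ →ₗ[ℂ] Matrix (Fin d) (Fin d) ℂ)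
    (hCP : CompletelyPositive d Φ) (hTP : ∀ ρ, (Φ ρ).trace = ρ.trace) :
    hasSchmidtNumberLE d r (idTensor d d (fun M => Φ M) (Pplus d)) ↔
    ∃ (n : ℕ) (K : Fin n → Matrix (Fin d) (Fin d) ℂ),
      (∀ α, (K α).rank ≤ r) ∧ ∀ ρ, Φ ρ = ∑ α, K α * ρ * (K α)ᴴ :=
  choi_schmidtNumber_iff_kraus_rank_general d r Φ
end

section
/- If Φ admits a Kraus decomposition in which all Kraus operators have rank one, then for every state ρ on ℂ^d ⊗ ℂ^d, the output (id ⊗ Φ)(ρ) is separable (a convex combination of product states); i.e., Φ is entanglement breaking. -/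
/-!
Write a rank-one Kraus operator as `K = x yᵀ`. With `Y = 1 ⊗ yᵀ`, which contracts the second
tensor factor against `y`, one has `(1 ⊗ K) ρ (1 ⊗ K)ᴴ = (Y ρ Yᴴ) ⊗ x x*`. The first factor is
positive semidefinite, hence a sum of rank-one projectors, so every term of `(id ⊗ Φ)(ρ)` is
separable, and so is their sum.
-/

open Matrix Kronecker BigOperators
open scoped ComplexOrder

/-- σ on ℂ^d ⊗ ℂ^d is separable: a nonnegative combination of tensor products
of rank-one projectors |u⟩⟨u| ⊗ |v⟩⟨v|. -/
def SeparableMat (d : ℕ) (σ : Matrix (Fin d × Fin d) (Fin d × Fin d) ℂ) : Prop :=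
  ∃ (n : ℕ) (c : Fin n → ℝ) (u v : Fin n → Fin d → ℂ),
    (∀ m, 0 ≤ c m) ∧
    σ = ∑ m, (c m : ℂ) •
      (Matrix.vecMulVec (u m) (star (u m)) ⊗ₖ Matrix.vecMulVec (v m) (star (v m)))

theorem Matrix.exists_eq_vecMulVec_of_rank_eq_one {K m n : Type*} [Field K] [Fintype m]
    [Fintype n] {A : Matrix m n K} (h : A.rank = 1) :
    ∃ (x : m → K) (y : n → K), A = vecMulVec x y := by
  rw [rank_eq_finrank_span_cols] at h
  obtain ⟨v, -, hv⟩ := finrank_eq_one_iff'.mp h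
  choose c hc using fun j => hv ⟨Aᵀ j, Submodule.subset_span ⟨j, rfl⟩⟩
  refine ⟨v.1, c, ?_⟩
  ext i j
  have := congrArg (fun w : Submodule.span K (Set.range Aᵀ) => (w : m → K) i) (hc j)
  simpa [vecMulVec_apply, mul_comm] using this.symm

/-- `1 ⊗ yᵀ`, with the one-point index of the row `yᵀ` dropped. -/
def Matrix.oneKroneckerRow {R n : Type*} [Semiring R] (l : Type*) [DecidableEq l] (y : n → R) :
    Matrix l (l × n) R :=
  ((1 : Matrix l l R) ⊗ₖ replicateRow Unit y).submatrix (·, ()) id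

theorem Matrix.one_kronecker_vecMulVec_mul_mul_conjTranspose {R l n : Type*} [CommSemiring R]
    [StarRing R] [Fintype l] [Fintype n] [DecidableEq l] (x y : n → R)
    (ρ : Matrix (l × n) (l × n) R) :
    ((1 : Matrix l l R) ⊗ₖ vecMulVec x y) * ρ * ((1 : Matrix l l R) ⊗ₖ vecMulVec x y)ᴴ =
      (oneKroneckerRow l y * ρ * (oneKroneckerRow l y)ᴴ) ⊗ₖ vecMulVec x (star x) := by
  ext ⟨i, j⟩ ⟨i', j'⟩
  simp only [oneKroneckerRow, mul_apply, kroneckerMap_apply, conjTranspose_apply,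
    submatrix_apply, vecMulVec_apply, replicateRow_apply, one_apply, Fintype.sum_prod_type,
    Finset.sum_mul, id_eq, ite_mul, one_mul, zero_mul]
  refine Fintype.sum_congr _ _ fun a => Fintype.sum_congr _ _ fun b =>
    Fintype.sum_congr _ _ fun c => Fintype.sum_congr _ _ fun e => ?_
  split_ifs <;> simp only [star_mul', star_zero, mul_zero, zero_mul, Pi.star_apply]
  ring

section Separable

variable {d : ℕ}

theorem SeparableMat.zero : SeparableMat d 0 :=
  ⟨0, 0, 0, 0, fun m => m.elim0, by simp⟩

theorem SeparableMat.add {σ τ : Matrix (Fin d × Fin d) (Fin d × Fin d) ℂ}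
    (hσ : SeparableMat d σ) (hτ : SeparableMat d τ) : SeparableMat d (σ + τ) := by
  obtain ⟨n, c, u, v, hc, rfl⟩ := hσ
  obtain ⟨n', c', u', v', hc', rfl⟩ := hτ
  refine ⟨n + n', Fin.append c c', Fin.append u u', Fin.append v v', fun m => ?_, ?_⟩
  · exact Fin.addCases (fun i => by simpa using hc i) (fun i => by simpa using hc' i) m
  · simp [Fin.sum_univ_add]

theorem Matrix.PosSemidef.separableMat_kronecker_vecMulVec_self {σ : Matrix (Fin d) (Fin d) ℂ}
    (hσ : σ.PosSemidef) (x : Fin d → ℂ) : SeparableMat d (σ ⊗ₖ vecMulVec x (star x)) := by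
  obtain ⟨n, u, rfl⟩ := posSemidef_iff_eq_sum_vecMulVec.mp hσ
  refine ⟨n, 1, u, fun _ => x, fun _ => zero_le_one, ?_⟩
  ext
  simp [Matrix.sum_apply, Finset.sum_mul]

end Separable

theorem entanglement_breaking_of_rank_one_kraus_general (d : ℕ) {ι : Type} [Fintype ι]
    (K : ι → Matrix (Fin d) (Fin d) ℂ) (hK : ∀ α, (K α).rank = 1)
    (ρ : Matrix (Fin d × Fin d) (Fin d × Fin d) ℂ)
    (hρ : ρ.PosSemidef) :
    SeparableMat d
      (∑ α, ((1 : Matrix (Fin d) (Fin d) ℂ) ⊗ₖ K α) * ρ *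
        (((1 : Matrix (Fin d) (Fin d) ℂ) ⊗ₖ K α))ᴴ) := by
  refine Finset.sum_induction _ (SeparableMat d) (fun _ _ => SeparableMat.add)
    SeparableMat.zero fun α _ => ?_
  obtain ⟨x, y, hxy⟩ := exists_eq_vecMulVec_of_rank_eq_one (hK α)
  rw [hxy, one_kronecker_vecMulVec_mul_mul_conjTranspose]
  exact (hρ.mul_mul_conjTranspose_same _).separableMat_kronecker_vecMulVec_self x

/-- if Φ(ρ) = ∑_α K_α ρ K_α* with every K_α of rank one, then for
every state ρ on ℂ^d ⊗ ℂ^d the output (id ⊗ Φ)(ρ) = ∑_α (1 ⊗ K_α) ρ (1 ⊗ K_α)*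
is separable: Φ is entanglement breaking. -/
theorem entanglement_breaking_of_rank_one_kraus (d : ℕ) {ι : Type} [Fintype ι]
    (K : ι → Matrix (Fin d) (Fin d) ℂ) (hK : ∀ α, (K α).rank = 1)
    (ρ : Matrix (Fin d × Fin d) (Fin d × Fin d) ℂ)
    (hρ : ρ.PosSemidef) (hρ1 : ρ.trace = 1) :
    SeparableMat d
      (∑ α, ((1 : Matrix (Fin d) (Fin d) ℂ) ⊗ₖ K α) * ρ *
        (((1 : Matrix (Fin d) (Fin d) ℂ) ⊗ₖ K α))ᴴ) :=
  entanglement_breaking_of_rank_one_kraus_general d K hK ρ hρ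
end

section
/- A linear map Λ : M_d(ℂ) → M_d(ℂ) is r-positive if and only if (id_d ⊗ Λ)(σ) is positive semidefinite for every positive semidefinite σ ∈ M_d ⊗ M_d of Schmidt number at most r. -/
open Matrix BigOperators
open scoped ComplexOrder

/-- Λ is k-positive: id_{M_k} ⊗ Λ preserves positive semidefiniteness. -/
def kPositive (k d : ℕ) (Λ : Matrix (Fin d) (Fin d) ℂ → Matrix (Fin d) (Fin d) ℂ) : Prop :=
  ∀ σ : Matrix (Fin k × Fin d) (Fin k × Fin d) ℂ,
    σ.PosSemidef → (idTensor k d Λ σ).PosSemidef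

/-!
Both directions reduce to pure states: id ⊗ Λ is linear, Schmidt-class states are by definition
mixtures of pure states of Schmidt rank ≤ r, and every positive semidefinite matrix is a sum of
rank-one ones. A vector ψ ∈ ℂ^d ⊗ ℂ^d has Schmidt rank ≤ r exactly when ψ = (E ⊗ 1) w for some
E : ℂ^r → ℂ^d and w ∈ ℂ^r ⊗ ℂ^d, and id ⊗ Λ commutes with conjugation by E ⊗ 1, so r-positivity
gives the forward direction. Conversely, every w ∈ ℂ^r ⊗ ℂ^d is (F ⊗ 1) ψ for some ψ ∈ ℂ^d ⊗ ℂ^d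
of Schmidt rank ≤ r: push w forward along an isometric embedding ℂ^r → ℂ^d when r ≤ d, and take
ψ maximally entangled (of Schmidt rank d < r) with F the matrix of w otherwise.
-/

open scoped Kronecker

namespace Matrix

variable {l m n p R : Type*} [Fintype m] [Fintype p] [DecidableEq p] [CommSemiring R]

theorem kronecker_one_mulVec_apply (E : Matrix n m R) (w : m × p → R)
    (a : n) (i : p) :
    ((E ⊗ₖ (1 : Matrix p p R)) *ᵥ w) (a, i) = ∑ t, E a t * w (t, i) := by
  simp [mulVec, dotProduct, Fintype.sum_prod_type, one_apply]

theorem kronecker_one_mul_mul_conjTranspose_apply [StarRing R] (E : Matrix n m R)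
    (σ : Matrix (m × p) (m × p) R) (a b : n) (i j : p) :
    ((E ⊗ₖ (1 : Matrix p p R)) * σ * (E ⊗ₖ (1 : Matrix p p R))ᴴ) (a, i) (b, j) =
      ∑ s, ∑ t, E a s * σ (s, i) (t, j) * star (E b t) := by
  simp only [mul_apply, kroneckerMap_apply, one_apply, mul_ite, mul_one, mul_zero, ite_mul,
    zero_mul, Fintype.sum_prod_type, Finset.sum_ite_eq, Finset.mem_univ, ↓reduceIte,
    conjTranspose_apply, apply_ite star, star_zero, Finset.sum_mul]
  exact Finset.sum_comm

theorem kronecker_one_mulVec_kronecker_one_mulVec_of_mul_eq_one [Fintype l] [DecidableEq l]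
    {P : Matrix l m R} {Q : Matrix m l R} (hPQ : P * Q = 1) (w : l × p → R) :
    (P ⊗ₖ (1 : Matrix p p R)) *ᵥ ((Q ⊗ₖ 1) *ᵥ w) = w := by
  rw [mulVec_mulVec, ← mul_kronecker_mul, hPQ, one_mul, one_kronecker_one, one_mulVec]

theorem vecMulVec_mulVec_star [StarRing R] (A : Matrix n m R) (v : m → R) :
    vecMulVec (A *ᵥ v) (star (A *ᵥ v)) = A * vecMulVec v (star v) * Aᴴ := by
  rw [mul_vecMulVec, vecMulVec_mul, star_mulVec]

theorem exists_mul_eq_one_of_le {k k' : ℕ} (h : k ≤ k') :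
    ∃ (P : Matrix (Fin k) (Fin k') R) (Q : Matrix (Fin k') (Fin k) R), P * Q = 1 :=
  ⟨(1 : Matrix (Fin k') (Fin k') R).submatrix (Fin.castLE h) id,
    (1 : Matrix (Fin k') (Fin k') R).submatrix id (Fin.castLE h), by
      rw [← submatrix_mul _ _ _ _ _ Function.bijective_id, one_mul,
        submatrix_one _ (Fin.castLE_injective h)]⟩

end Matrix

section SchmidtRank

variable {d k k' : ℕ} {ψ : Fin d × Fin d → ℂ}

theorem schmidtRankLE_iff_exists_kronecker_one_mulVec :
    schmidtRankLE d k ψ ↔ ∃ (E : Matrix (Fin d) (Fin k) ℂ) (w : Fin k × Fin d → ℂ),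
      ψ = (E ⊗ₖ 1) *ᵥ w := by
  constructor
  · rintro ⟨u, v, rfl⟩
    refine ⟨of fun a t => u t a, fun q => v q.1 q.2, ?_⟩
    ext ⟨a, i⟩
    simp [kronecker_one_mulVec_apply]
  · rintro ⟨E, w, rfl⟩
    refine ⟨fun t a => E a t, fun t i => w (t, i), ?_⟩
    ext ⟨a, i⟩
    simp [kronecker_one_mulVec_apply]

theorem schmidtRankLE_self : schmidtRankLE d d ψ :=
  schmidtRankLE_iff_exists_kronecker_one_mulVec.2 ⟨1, ψ, by simp⟩

theorem schmidtRankLE.mono (hψ : schmidtRankLE d k ψ) (h : k ≤ k') : schmidtRankLE d k' ψ := by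
  obtain ⟨E, w, rfl⟩ := schmidtRankLE_iff_exists_kronecker_one_mulVec.1 hψ
  obtain ⟨P, Q, hPQ⟩ := exists_mul_eq_one_of_le (R := ℂ) h
  refine schmidtRankLE_iff_exists_kronecker_one_mulVec.2 ⟨E * P, (Q ⊗ₖ 1) *ᵥ w, ?_⟩
  conv_lhs => rw [← kronecker_one_mulVec_kronecker_one_mulVec_of_mul_eq_one hPQ w]
  rw [mulVec_mulVec, ← mul_kronecker_mul, one_mul]

theorem schmidtRankLE.hasSchmidtNumberLE (hψ : schmidtRankLE d k ψ) :
    hasSchmidtNumberLE d k (vecMulVec ψ (star ψ)) :=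
  ⟨1, 1, fun _ => ψ, fun _ => zero_le_one, fun _ => hψ, by simp⟩

theorem exists_schmidtRankLE_kronecker_one_mulVec_eq (w : Fin k × Fin d → ℂ) :
    ∃ (F : Matrix (Fin k) (Fin d) ℂ) (ψ : Fin d × Fin d → ℂ),
      schmidtRankLE d k ψ ∧ w = (F ⊗ₖ 1) *ᵥ ψ := by
  rcases le_total k d with h | h
  · obtain ⟨P, Q, hPQ⟩ := exists_mul_eq_one_of_le (R := ℂ) h
    exact ⟨P, (Q ⊗ₖ 1) *ᵥ w,
      schmidtRankLE_iff_exists_kronecker_one_mulVec.2 ⟨Q, w, rfl⟩,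
      (kronecker_one_mulVec_kronecker_one_mulVec_of_mul_eq_one hPQ w).symm⟩
  · refine ⟨of fun a t => w (a, t), fun q => (1 : Matrix (Fin d) (Fin d) ℂ) q.1 q.2,
      schmidtRankLE_self.mono h, ?_⟩
    ext ⟨a, i⟩
    simp [kronecker_one_mulVec_apply, one_apply]

end SchmidtRank

section Ampliation

variable {d : ℕ} (Λ : Matrix (Fin d) (Fin d) ℂ →ₗ[ℂ] Matrix (Fin d) (Fin d) ℂ)

def idTensorLinearMap (n : ℕ) :
    Matrix (Fin n × Fin d) (Fin n × Fin d) ℂ →ₗ[ℂ]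
      Matrix (Fin n × Fin d) (Fin n × Fin d) ℂ :=
  (compLinearEquiv _ _ _ _ _ ℂ).toLinearMap ∘ₗ Λ.mapMatrix ∘ₗ
    (compLinearEquiv _ _ _ _ _ ℂ).symm.toLinearMap

theorem idTensorLinearMap_apply {n : ℕ} (σ : Matrix (Fin n × Fin d) (Fin n × Fin d) ℂ) :
    idTensorLinearMap Λ n σ = idTensor n d (fun M => Λ M) σ := rfl

theorem idTensor_kronecker_one_mul_mul_conjTranspose {n m : ℕ} (E : Matrix (Fin n) (Fin m) ℂ)
    (σ : Matrix (Fin m × Fin d) (Fin m × Fin d) ℂ) :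
    idTensor n d (fun M => Λ M) ((E ⊗ₖ (1 : Matrix (Fin d) (Fin d) ℂ)) * σ *
        (E ⊗ₖ (1 : Matrix (Fin d) (Fin d) ℂ))ᴴ) =
      (E ⊗ₖ (1 : Matrix (Fin d) (Fin d) ℂ)) * idTensor m d (fun M => Λ M) σ *
        (E ⊗ₖ (1 : Matrix (Fin d) (Fin d) ℂ))ᴴ := by
  ext ⟨a, i⟩ ⟨b, j⟩
  simp only [idTensor, of_apply, kronecker_one_mul_mul_conjTranspose_apply]
  have hblock : (of fun i' j' => ∑ s, ∑ t, E a s * σ (s, i') (t, j') * star (E b t)) =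
      ∑ s, ∑ t, (E a s * star (E b t)) • of fun i' j' => σ (s, i') (t, j') := by
    ext i' j'
    simp only [of_apply, Matrix.sum_apply, Matrix.smul_apply, smul_eq_mul]
    exact Finset.sum_congr rfl fun s _ => Finset.sum_congr rfl fun t _ => by ring
  simp only [hblock, map_sum, map_smul, Matrix.sum_apply, Matrix.smul_apply, smul_eq_mul]
  exact Finset.sum_congr rfl fun s _ => Finset.sum_congr rfl fun t _ => by ring

theorem posSemidef_idTensor_vecMulVec_kronecker_one_mulVec {n k : ℕ} {w : Fin k × Fin d → ℂ}
    (hw : (idTensor k d (fun M => Λ M) (vecMulVec w (star w))).PosSemidef)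
    (E : Matrix (Fin n) (Fin k) ℂ) :
    (idTensor n d (fun M => Λ M)
      (vecMulVec ((E ⊗ₖ 1) *ᵥ w) (star ((E ⊗ₖ 1) *ᵥ w)))).PosSemidef := by
  rw [vecMulVec_mulVec_star, idTensor_kronecker_one_mul_mul_conjTranspose]
  exact hw.mul_mul_conjTranspose_same _

end Ampliation

/-- a linear map Λ on M_d is r-positive iff (id_d ⊗ Λ)(σ) is
positive semidefinite for every positive semidefinite σ on ℂ^d ⊗ ℂ^d of Schmidt
number at most r. -/
theorem rPositive_iff_posSemidef_on_schmidt_class (d r : ℕ)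
    (Λ : Matrix (Fin d) (Fin d) ℂ →ₗ[ℂ] Matrix (Fin d) (Fin d) ℂ) :
    kPositive r d (fun M => Λ M) ↔
    ∀ σ : Matrix (Fin d × Fin d) (Fin d × Fin d) ℂ,
      σ.PosSemidef → hasSchmidtNumberLE d r σ →
        (idTensor d d (fun M => Λ M) σ).PosSemidef := by
  constructor
  · rintro hΛ σ - ⟨N, c, ψ, hc, hψ, rfl⟩
    rw [← idTensorLinearMap_apply, map_sum]
    refine posSemidef_sum _ fun m _ => ?_
    obtain ⟨E, w, hEw⟩ := schmidtRankLE_iff_exists_kronecker_one_mulVec.1 (hψ m)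
    rw [map_smul, idTensorLinearMap_apply, hEw]
    exact (posSemidef_idTensor_vecMulVec_kronecker_one_mulVec Λ
      (hΛ _ (posSemidef_vecMulVec_self_star w)) E).smul (Complex.zero_le_real.2 (hc m))
  · intro hΛ σ hσ
    obtain ⟨N, v, rfl⟩ := posSemidef_iff_eq_sum_vecMulVec.1 hσ
    rw [← idTensorLinearMap_apply, map_sum]
    refine posSemidef_sum _ fun m _ => ?_
    obtain ⟨F, ψ, hψ, hFψ⟩ := exists_schmidtRankLE_kronecker_one_mulVec_eq (v m)
    rw [idTensorLinearMap_apply, hFψ]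
    exact posSemidef_idTensor_vecMulVec_kronecker_one_mulVec Λ
      (hΛ _ (posSemidef_vecMulVec_self_star ψ) hψ.hasSchmidtNumberLE) F
end

section
/- For 0 ≤ λ ≤ 1/(d+1), the isotropic state I_λ = ((1−λ)/d²) I ⊗ I + λ P⁺_d on ℂ^d ⊗ ℂ^d is separable. -/
open Matrix Kronecker BigOperators

noncomputable def zeta : ℂ := Complex.exp (2 * Real.pi * Complex.I / 3)

lemma zeta_prim : IsPrimitiveRoot zeta 3 := by
  have := Complex.isPrimitiveRoot_exp 3 (by norm_num)
  simpa [zeta] using this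

lemma zeta_pow_three : zeta ^ 3 = 1 := zeta_prim.pow_eq_one

lemma star_zeta : (starRingEnd ℂ) zeta = zeta ^ 2 := by
  have h1 : zeta * zeta ^ 2 = 1 := by linear_combination zeta_pow_three
  have hc : (starRingEnd ℂ) zeta * zeta = 1 := by
    rw [zeta, ← Complex.exp_conj, ← Complex.exp_add]
    have : (starRingEnd ℂ) (2 * (Real.pi:ℂ) * Complex.I / 3) = -(2 * (Real.pi:ℂ) * Complex.I / 3) := by
      simp [map_div₀, Complex.conj_I, map_ofNat]
      ring
    rw [this, neg_add_cancel, Complex.exp_zero]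
  calc (starRingEnd ℂ) zeta = (starRingEnd ℂ) zeta * (zeta * zeta ^ 2) := by rw [h1, mul_one]
    _ = ((starRingEnd ℂ) zeta * zeta) * zeta ^ 2 := by ring
    _ = zeta ^ 2 := by rw [hc, one_mul]

lemma star_zeta_pow (n : ℕ) : (starRingEnd ℂ) (zeta ^ n) = zeta ^ (2 * n) := by
  rw [map_pow, star_zeta, ← pow_mul, mul_comm]

lemma zeta_sum (c : ℕ) : ∑ x : Fin 3, zeta ^ ((x : ℕ) * c) = if 3 ∣ c then 3 else 0 := by
  by_cases h : 3 ∣ c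
  · obtain ⟨q, rfl⟩ := h
    have h1 : ∀ x : Fin 3, zeta ^ ((x:ℕ) * (3*q)) = 1 := by
      intro x
      rw [show (x:ℕ) * (3*q) = 3 * ((x:ℕ)*q) by ring, pow_mul, zeta_pow_three, one_pow]
    simp [h1]
  · rw [if_neg h]
    have hw1 : zeta ^ c ≠ 1 := fun hc => h ((zeta_prim.pow_eq_one_iff_dvd c).mp hc)
    have hw3 : (zeta ^ c) ^ 3 = 1 := by rw [← pow_mul, mul_comm, pow_mul, zeta_pow_three, one_pow]
    have hfac : (zeta ^ c - 1) * ((zeta^c)^2 + zeta^c + 1) = 0 := by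
      linear_combination hw3
    have hsum : (zeta^c)^2 + zeta^c + 1 = 0 := by
      rcases mul_eq_zero.mp hfac with h' | h'
      · exact absurd (by linear_combination h') hw1
      · exact h'
    rw [Fin.sum_univ_three]
    show zeta ^ ((0:ℕ) * c) + zeta ^ ((1:ℕ)*c) + zeta ^ ((2:ℕ)*c) = 0
    rw [zero_mul, pow_zero, one_mul, two_mul, pow_add]
    linear_combination hsum

set_option linter.unnecessarySeqFocus false in
lemma key_prod (d : ℕ) (i j k l : Fin d) :
    ∏ p : Fin d, (if 3 ∣ ((if p = i then 1 else 0) + 2 * (if p = j then 1 else 0)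
        + 2 * (if p = k then 1 else 0) + 4 * (if p = l then 1 else 0) : ℕ) then (3:ℂ) else 0)
    = (3:ℂ)^d * ((if i = k then 1 else 0) * (if j = l then 1 else 0)
        + (if i = j then 1 else 0) * (if k = l then 1 else 0)
        - (if i = j ∧ j = k ∧ k = l then 1 else 0)) := by
  set c : Fin d → ℕ := fun p => (if p = i then 1 else 0) + 2 * (if p = j then 1 else 0)
      + 2 * (if p = k then 1 else 0) + 4 * (if p = l then 1 else 0) with hc
  have hall : (∀ p, 3 ∣ c p) → ∏ p, (if 3 ∣ c p then (3:ℂ) else 0) = 3^d := by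
    intro h; simp [h]
  have hzero : ∀ p, ¬(3 ∣ c p) → ∏ p, (if 3 ∣ c p then (3:ℂ) else 0) = 0 := by
    intro p h; exact Finset.prod_eq_zero (Finset.mem_univ p) (if_neg h)
  by_cases hij : i = j
  · by_cases hkl : k = l
    · by_cases hik : i = k
      · subst hij; subst hkl; subst hik
        rw [hall (by intro p; by_cases hpi : p = i <;> simp [hc, hpi] <;> omega)]
        simp
      · subst hij; subst hkl
        rw [hall (by intro p; by_cases hpi : p = i <;> by_cases hpk : p = k <;>
              simp [hc, hpi, hpk, hik, Ne.symm hik] <;> omega)]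
        simp [hik, Ne.symm hik]
    · by_cases hik : i = k
      · subst hij; subst hik
        have hil : ¬ i = l := fun h => hkl h
        rw [hzero l (by simp [hc, Ne.symm hil, hkl])]
        simp [hkl, hil]
      · subst hij
        have hki : ¬ k = i := fun h => hik h.symm
        rw [hzero k (by simp [hc, hki, hkl])]
        simp [hik, hkl]
  · by_cases hik : i = k
    · by_cases hjl : j = l
      · subst hik; subst hjl
        rw [hall (by intro p; by_cases hpi : p = i <;> by_cases hpj : p = j <;>
              simp [hc, hpi, hpj, hij, Ne.symm hij] <;> omega)]
        simp [hij, Ne.symm hij]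
      · subst hik
        have hji : ¬ j = i := fun h => hij h.symm
        rw [hzero j (by simp [hc, hji, hjl])]
        simp [hij, hjl]
    · rw [hzero i (by
        by_cases hil : i = l
        · subst hil; simp [hc, hij, hik]
        · simp [hc, hij, hik, hil])]
      simp [hij, hik]

set_option maxHeartbeats 800000 in
lemma key_sum (d : ℕ) (i j k l : Fin d) :
    ∑ a : Fin d → Fin 3,
      zeta ^ ((a i : ℕ) + 2 * (a j : ℕ) + 2 * (a k : ℕ) + 4 * (a l : ℕ))
    = (3:ℂ)^d * ((if i = k then 1 else 0) * (if j = l then 1 else 0)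
        + (if i = j then 1 else 0) * (if k = l then 1 else 0)
        - (if i = j ∧ j = k ∧ k = l then 1 else 0)) := by
  set c : Fin d → ℕ := fun p => (if p = i then 1 else 0) + 2 * (if p = j then 1 else 0)
      + 2 * (if p = k then 1 else 0) + 4 * (if p = l then 1 else 0) with hc
  have hsum_if : ∀ (a : Fin d → Fin 3) (t : Fin d),
      (∑ p, (a p : ℕ) * (if p = t then 1 else 0)) = (a t : ℕ) := by
    intro a t; simp [mul_ite]
  have hmul : ∀ (m : ℕ) (a : Fin d → Fin 3) (t : Fin d),
      (∑ p, (a p : ℕ) * (m * if p = t then 1 else 0)) = m * (a t : ℕ) := by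
    intro m a t
    calc (∑ p, (a p : ℕ) * (m * if p = t then 1 else 0))
        = m * ∑ p, (a p : ℕ) * (if p = t then 1 else 0) := by
          rw [Finset.mul_sum]; exact Finset.sum_congr rfl fun p _ => by ring
      _ = m * (a t : ℕ) := by rw [hsum_if]
  have hexp : ∀ a : Fin d → Fin 3,
      ((a i : ℕ) + 2 * (a j : ℕ) + 2 * (a k : ℕ) + 4 * (a l : ℕ)) = ∑ p, (a p : ℕ) * c p := by
    intro a
    simp only [hc, mul_add, Finset.sum_add_distrib, hsum_if a i, hmul 2 a, hmul 4 a]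
  calc ∑ a : Fin d → Fin 3,
        zeta ^ ((a i : ℕ) + 2 * (a j : ℕ) + 2 * (a k : ℕ) + 4 * (a l : ℕ))
      = ∑ a ∈ Fintype.piFinset (fun _ : Fin d => (Finset.univ : Finset (Fin 3))),
          ∏ p, zeta ^ ((a p : ℕ) * c p) := by
        rw [Fintype.piFinset_univ]
        exact Finset.sum_congr rfl fun a _ => by
          rw [hexp a, ← Finset.prod_pow_eq_pow_sum]
    _ = ∏ p, ∑ x : Fin 3, zeta ^ ((x : ℕ) * c p) := (Finset.prod_univ_sum (fun _ : Fin d => (Finset.univ : Finset (Fin 3))) (fun p x => zeta ^ ((x : ℕ) * c p))).symm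
    _ = ∏ p, (if 3 ∣ c p then (3:ℂ) else 0) := Finset.prod_congr rfl fun p _ => zeta_sum (c p)
    _ = (3:ℂ)^d * ((if i = k then 1 else 0) * (if j = l then 1 else 0)
        + (if i = j then 1 else 0) * (if k = l then 1 else 0)
        - (if i = j ∧ j = k ∧ k = l then 1 else 0)) := key_prod d i j k l

/-- for 0 ≤ λ ≤ 1/(d+1) the isotropic state
I_λ = ((1−λ)/d²) I⊗I + λ P⁺_d is separable. -/
theorem isotropic_separable (d : ℕ) (hd : 0 < d) (lam : ℝ)
    (h0 : 0 ≤ lam) (h1 : lam ≤ 1 / (d + 1)) :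
    SeparableMat d
      ((((1 - lam) / (d : ℂ) ^ 2)) • (1 : Matrix (Fin d × Fin d) (Fin d × Fin d) ℂ)
        + (lam : ℂ) • Pplus d) := by
  classical
  set T := (Fin d × Fin d) ⊕ (Fin d ⊕ (Fin d → Fin 3)) with hT
  have hcard : Fintype.card T = d * d + (d + 3 ^ d) := by
    simp [hT, Fintype.card_sum, Fintype.card_prod, Fintype.card_fin, Fintype.card_fun]
  let e : T ≃ Fin (d * d + (d + 3 ^ d)) := Fintype.equivFinOfCardEq hcard
  set c0 : ℝ := (1 - lam * (d + 1)) / (d:ℝ) ^ 2 with hc0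
  set c1 : ℝ := lam / d with hc1
  set c2 : ℝ := lam / (d * 3 ^ d) with hc2
  set C : T → ℝ := Sum.elim (fun _ => c0) (Sum.elim (fun _ => c1) (fun _ => c2)) with hC
  set U : T → Fin d → ℂ := Sum.elim (fun xy p => if p = xy.1 then 1 else 0)
      (Sum.elim (fun x p => if p = x then 1 else 0) (fun a p => zeta ^ (a p : ℕ))) with hU
  set V : T → Fin d → ℂ := Sum.elim (fun xy p => if p = xy.2 then 1 else 0)
      (Sum.elim (fun x p => if p = x then 1 else 0) (fun a p => zeta ^ (2 * (a p : ℕ)))) with hV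
  have hc0nn : 0 ≤ c0 := by
    apply div_nonneg _ (by positivity)
    have hpos : (0:ℝ) < (d:ℝ) + 1 := by positivity
    have := (le_div_iff₀ hpos).mp h1
    linarith
  have hc1nn : 0 ≤ c1 := by positivity
  have hc2nn : 0 ≤ c2 := by positivity
  refine ⟨d * d + (d + 3 ^ d), fun m => C (e.symm m), fun m => U (e.symm m),
    fun m => V (e.symm m), ?_, ?_⟩
  · have hCnn : ∀ t : T, 0 ≤ C t := by
      rintro (t | t | t) <;> simp [hC, hc0nn, hc1nn, hc2nn]
    exact fun m => hCnn _
  · rw [show (∑ m, ((C (e.symm m) : ℂ)) •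
        (Matrix.vecMulVec (U (e.symm m)) (star (U (e.symm m))) ⊗ₖ
          Matrix.vecMulVec (V (e.symm m)) (star (V (e.symm m)))))
      = ∑ t : T, ((C t : ℂ)) •
        (Matrix.vecMulVec (U t) (star (U t)) ⊗ₖ Matrix.vecMulVec (V t) (star (V t)))
      from e.symm.sum_comp (fun t => ((C t : ℂ)) •
        (Matrix.vecMulVec (U t) (star (U t)) ⊗ₖ Matrix.vecMulVec (V t) (star (V t))))]
    rw [Fintype.sum_sum_type, Fintype.sum_sum_type]
    ext ⟨i, j⟩ ⟨k, l⟩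
    simp only [Matrix.add_apply, Matrix.smul_apply, Matrix.one_apply, Matrix.sum_apply,
      Matrix.kroneckerMap_apply, Matrix.vecMulVec_apply, Pi.star_apply, smul_eq_mul,
      Pplus, hC, hU, hV, Sum.elim_inl, Sum.elim_inr]
    have star_zeta_pow' : ∀ n : ℕ, star (zeta ^ n) = zeta ^ (2 * n) := fun n => star_zeta_pow n
    have dsum : ∀ ii kk : Fin d,
        (∑ x : Fin d, (if ii = x then (1:ℂ) else 0) * star (if kk = x then (1:ℂ) else 0))
          = if ii = kk then 1 else 0 := by
      intro ii kk
      by_cases h : ii = kk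
      · subst h; simp [apply_ite (star : ℂ → ℂ)]
      · rw [if_neg h]
        apply Finset.sum_eq_zero
        intro x _
        by_cases h1 : ii = x
        · have h2 : ¬ kk = x := fun hx => h (h1.trans hx.symm)
          simp [h1, h2, apply_ite (star : ℂ → ℂ)]
        · simp [h1]
    have S1 : ∑ x : Fin d × Fin d,
        (c0:ℂ) * ((if i = x.1 then 1 else 0) * star (if k = x.1 then 1 else 0) *
          ((if j = x.2 then 1 else 0) * star (if l = x.2 then 1 else 0)))
        = (c0:ℂ) * ((if i = k then 1 else 0) * (if j = l then 1 else 0)) := by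
      rw [Fintype.sum_prod_type]
      dsimp only
      rw [← dsum i k, ← dsum j l, Finset.sum_mul_sum, Finset.mul_sum]
      refine Finset.sum_congr rfl fun x _ => ?_
      rw [Finset.mul_sum]
    have S2 : ∑ x : Fin d,
        (c1:ℂ) * ((if i = x then 1 else 0) * star (if k = x then 1 else 0) *
          ((if j = x then 1 else 0) * star (if l = x then 1 else 0)))
        = (c1:ℂ) * (if i = j ∧ j = k ∧ k = l then 1 else 0) := by
      by_cases h : i = j ∧ j = k ∧ k = l
      · obtain ⟨h1, h2, h3⟩ := h
        subst h1; subst h2; subst h3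
        rw [if_pos ⟨rfl, rfl, rfl⟩, mul_one]
        simp [apply_ite (star : ℂ → ℂ), mul_ite]
      · rw [if_neg h, mul_zero]
        apply Finset.sum_eq_zero
        intro x _
        by_cases hix : i = x
        · by_cases hjx : j = x
          · by_cases hkx : k = x
            · by_cases hlx : l = x
              · exact absurd ⟨hix.trans hjx.symm, hjx.trans hkx.symm, hkx.trans hlx.symm⟩ h
              · simp [hlx, apply_ite (star : ℂ → ℂ)]
            · simp [hkx, apply_ite (star : ℂ → ℂ)]
          · simp [hjx]
        · simp [hix]
    have S3 : ∑ a : Fin d → Fin 3,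
        (c2:ℂ) * (zeta ^ (a i : ℕ) * star (zeta ^ (a k : ℕ)) *
          (zeta ^ (2 * (a j : ℕ)) * star (zeta ^ (2 * (a l : ℕ)))))
        = (c2:ℂ) * ((3:ℂ)^d * ((if i = k then 1 else 0) * (if j = l then 1 else 0)
            + (if i = j then 1 else 0) * (if k = l then 1 else 0)
            - (if i = j ∧ j = k ∧ k = l then 1 else 0))) := by
      have hterm : ∀ a : Fin d → Fin 3,
          zeta ^ (a i : ℕ) * star (zeta ^ (a k : ℕ)) *
            (zeta ^ (2 * (a j : ℕ)) * star (zeta ^ (2 * (a l : ℕ))))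
          = zeta ^ ((a i : ℕ) + 2 * (a j : ℕ) + 2 * (a k : ℕ) + 4 * (a l : ℕ)) := by
        intro a
        rw [star_zeta_pow', star_zeta_pow', ← pow_add, ← pow_add, ← pow_add]
        congr 1
        ring
      simp_rw [hterm]
      rw [← Finset.mul_sum, key_sum d i j k l]
    rw [S1, S2, S3]
    have hXif : (if (i, j) = (k, l) then (1:ℂ) else 0)
        = (if i = k then 1 else 0) * (if j = l then 1 else 0) := by
      by_cases h1 : i = k <;> by_cases h2 : j = l <;> simp [h1, h2, Prod.ext_iff]
    have hsq : ((Real.sqrt d : ℝ) : ℂ)⁻¹ * ((Real.sqrt d : ℝ) : ℂ)⁻¹ = ((d:ℂ))⁻¹ := by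
      rw [← mul_inv, ← Complex.ofReal_mul, Real.mul_self_sqrt (by positivity)]
      norm_num
    have hP : (if i = j then ((Real.sqrt d : ℝ) : ℂ)⁻¹ else 0) *
        star (if k = l then ((Real.sqrt d : ℝ) : ℂ)⁻¹ else 0)
        = (if i = j then (1:ℂ) else 0) * (if k = l then 1 else 0) * ((d:ℂ))⁻¹ := by
      by_cases h1 : i = j <;> by_cases h2 : k = l <;>
        simp [h1, h2, apply_ite (star : ℂ → ℂ), Complex.star_def, Complex.conj_ofReal, hsq]
    rw [hXif, hP, hc0, hc1, hc2]
    have hdC : (d:ℂ) ≠ 0 := Nat.cast_ne_zero.mpr hd.ne'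
    have h3C : ((3:ℂ))^d ≠ 0 := pow_ne_zero _ (by norm_num)
    push_cast
    generalize (if i = k then (1:ℂ) else 0) = A
    generalize (if j = l then (1:ℂ) else 0) = B
    generalize (if i = j then (1:ℂ) else 0) = Cc
    generalize (if k = l then (1:ℂ) else 0) = D
    generalize (if i = j ∧ j = k ∧ k = l then (1:ℂ) else 0) = E
    field_simp
    ring
end

section
/- The map Λ_μ : M_d(ℂ) → M_d(ℂ) defined by Λ_μ(σ) = Tr(σ) I_d − μ σ is k-positive if and only if μ ≤ 1/k (for μ ≥ 0 and 1 ≤ k ≤ d). -/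
open Matrix BigOperators
open scoped ComplexOrder

/-!
Under `id_k ⊗ Λ_μ` a state `σ` goes to `Tr₂ σ ⊗ I - μ σ`. Reshape vectors of `ℂᵏ ⊗ ℂᵈ` into
`d × k` matrices, `ψ ↔ Z` and `v ↔ Y`. For `σ = ψψ*` the quadratic form at `v` is then
`‖Y Zᴴ‖²_F - μ |Tr (Y Zᴴ)|²`. The matrix `Y Zᴴ` factors through `ℂᵏ`, so by Cauchy–Schwarz
`|Tr (Y Zᴴ)|² ≤ k ‖Y Zᴴ‖²_F`, and this gives positivity when `μ k ≤ 1`. Every positive `σ` is a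
sum of such `ψψ*`. Conversely, a maximally entangled `ψ`, for which `Z` is an isometry, tested
against `v = ψ`, gives `k - μ k² ≥ 0`.
-/

open scoped Kronecker

namespace Matrix

variable {m n R : Type*}

def partialTrace [AddCommMonoid R] [Fintype n] (σ : Matrix (m × n) (m × n) R) : Matrix m m R :=
  of fun p q => ∑ i, σ (p, i) (q, i)

lemma partialTrace_sum [AddCommMonoid R] [Fintype n] {ι : Type*} (s : Finset ι)
    (σ : ι → Matrix (m × n) (m × n) R) :
    partialTrace (∑ j ∈ s, σ j) = ∑ j ∈ s, partialTrace (σ j) := by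
  ext p q
  simp only [partialTrace, of_apply, sum_apply]
  exact Finset.sum_comm

lemma sum_kronecker [NonUnitalNonAssocSemiring R] {ι l p : Type*} (s : Finset ι)
    (A : ι → Matrix l m R) (B : Matrix n p R) :
    (∑ j ∈ s, A j) ⊗ₖ B = ∑ j ∈ s, A j ⊗ₖ B := by
  ext
  simp [kroneckerMap_apply, Finset.sum_mul, sum_apply]

lemma partialTrace_vecMulVec_vec [CommSemiring R] [StarRing R] [Fintype n] (Z : Matrix n m R) :
    partialTrace (vecMulVec (vec Z) (star (vec Z))) = (Zᴴ * Z)ᵀ := by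
  ext p q
  simp [partialTrace, vecMulVec_apply, vec, mul_apply, mul_comm]

lemma star_vec_dotProduct_kronecker_one_mulVec_vec [CommSemiring R] [StarRing R] [Fintype m]
    [Fintype n] [DecidableEq n] (A : Matrix m m R) (Y : Matrix n m R) :
    star (vec Y) ⬝ᵥ (A ⊗ₖ (1 : Matrix n n R)) *ᵥ vec Y = (Yᴴ * Y * Aᵀ).trace := by
  rw [kronecker_mulVec_vec, star_vec_dotProduct_vec, Matrix.one_mul, Matrix.mul_assoc]

lemma star_dotProduct_vecMulVec_mulVec {ι : Type*} [Fintype ι] (v w : ι → ℂ) :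
    star v ⬝ᵥ vecMulVec w (star w) *ᵥ v = (‖star w ⬝ᵥ v‖ ^ 2 : ℝ) := by
  rw [vecMulVec_mulVec, Complex.ofReal_pow, ← Complex.conj_mul', dotProduct_smul,
    MulOpposite.smul_eq_mul_unop, MulOpposite.unop_op, starRingEnd_apply, star_dotProduct]

lemma trace_conjTranspose_mul_self_mul_conjTranspose [CommSemiring R] [StarRing R] [Fintype m]
    [Fintype n] (Y Z : Matrix n m R) :
    ((Y * Zᴴ)ᴴ * (Y * Zᴴ)).trace = (Yᴴ * Y * (Zᴴ * Z)).trace := by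
  rw [conjTranspose_mul, conjTranspose_conjTranspose, Matrix.mul_assoc, trace_mul_comm]
  simp only [Matrix.mul_assoc]

lemma re_trace_conjTranspose_mul_self_nonneg [Fintype m] [Fintype n] (P : Matrix m n ℂ) :
    0 ≤ (Pᴴ * P).trace.re :=
  (Complex.nonneg_iff.mp (posSemidef_conjTranspose_mul_self P).trace_nonneg).1

lemma norm_trace_conjTranspose_mul_sq_le [Fintype m] [Fintype n] (P Q : Matrix m n ℂ) :
    ‖(Pᴴ * Q).trace‖ ^ 2 ≤ (Pᴴ * P).trace.re * (Qᴴ * Q).trace.re := by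
  have h := inner_mul_inner_self_le (𝕜 := ℂ) (WithLp.toLp 2 (vec P)) (WithLp.toLp 2 (vec Q))
  simp only [EuclideanSpace.inner_toLp_toLp, ← dotProduct_comm (star _), star_vec_dotProduct_vec,
    RCLike.re_to_complex] at h
  rwa [← norm_star (Qᴴ * P).trace, ← trace_conjTranspose, conjTranspose_mul,
    conjTranspose_conjTranspose, ← sq] at h

open scoped MatrixOrder in
/-- Cauchy–Schwarz for the pairing `Tr (Pᴴ Q)` with `P = Z A⁻¹ Cᴴ`, `Q = Y Cᴴ`, where
`CᴴC = A = ZᴴZ + ε`: then `Tr (Pᴴ Q) = Tr (Y Zᴴ)` and `Tr (Pᴴ P) = Tr (A⁻¹ ZᴴZ) ≤ card m`. -/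
lemma norm_trace_mul_conjTranspose_sq_le_add [Fintype m] [Fintype n] (Y Z : Matrix n m ℂ)
    {ε : ℝ} (hε : 0 < ε) :
    ‖(Y * Zᴴ).trace‖ ^ 2 ≤
      Fintype.card m * (((Y * Zᴴ)ᴴ * (Y * Zᴴ)).trace.re + ε * (Yᴴ * Y).trace.re) := by
  classical
  set A := Zᴴ * Z + (ε : ℂ) • 1 with hA_def
  have hA : A.PosDef := PosDef.posSemidef_add (posSemidef_conjTranspose_mul_self Z)
    (PosDef.one.smul (by exact_mod_cast hε))
  have hAA : A * A⁻¹ = 1 := mul_nonsing_inv A ((isUnit_iff_isUnit_det A).mp hA.isUnit)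
  have hAinv : A⁻¹ᴴ = A⁻¹ := hA.inv.isHermitian.eq
  obtain ⟨C, hC⟩ := CStarAlgebra.nonneg_iff_eq_star_mul_self.mp hA.posSemidef.nonneg
  have hconj : ∀ X, (C * X * Cᴴ).trace = (A * X).trace := fun X => by
    rw [trace_mul_comm, ← Matrix.mul_assoc, hC, star_eq_conjTranspose]
  set P := Z * A⁻¹ * Cᴴ
  set Q := Y * Cᴴ
  have hPQ : (Pᴴ * Q).trace = (Y * Zᴴ).trace := by
    rw [show Pᴴ * Q = C * (A⁻¹ * Zᴴ * Y) * Cᴴ by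
        simp [P, Q, conjTranspose_mul, hAinv, Matrix.mul_assoc],
      hconj, ← Matrix.mul_assoc, ← Matrix.mul_assoc, hAA, Matrix.one_mul, trace_mul_comm]
  have hP : (Pᴴ * P).trace.re ≤ Fintype.card m := by
    rw [show Pᴴ * P = C * (A⁻¹ * (Zᴴ * Z) * A⁻¹) * Cᴴ by
        simp [P, conjTranspose_mul, hAinv, Matrix.mul_assoc],
      hconj, ← Matrix.mul_assoc, ← Matrix.mul_assoc, hAA, Matrix.one_mul,
      show Zᴴ * Z = A - (ε : ℂ) • 1 by simp [hA_def], Matrix.sub_mul, hAA, trace_sub, trace_one,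
      Matrix.smul_mul, Matrix.one_mul, trace_smul, smul_eq_mul, Complex.sub_re,
      Complex.natCast_re, Complex.re_ofReal_mul]
    have := (Complex.nonneg_iff.mp hA.inv.posSemidef.trace_nonneg).1
    nlinarith
  have hQ : (Qᴴ * Q).trace.re = ((Y * Zᴴ)ᴴ * (Y * Zᴴ)).trace.re + ε * (Yᴴ * Y).trace.re := by
    rw [show Qᴴ * Q = C * (Yᴴ * Y) * Cᴴ by simp [Q, conjTranspose_mul, Matrix.mul_assoc],
      hconj, hA_def, Matrix.add_mul, trace_add, trace_mul_comm (Zᴴ * Z),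
      trace_conjTranspose_mul_self_mul_conjTranspose, Matrix.smul_mul, Matrix.one_mul, trace_smul,
      smul_eq_mul, Complex.add_re, Complex.re_ofReal_mul]
  calc ‖(Y * Zᴴ).trace‖ ^ 2 = ‖(Pᴴ * Q).trace‖ ^ 2 := by rw [hPQ]
    _ ≤ (Pᴴ * P).trace.re * (Qᴴ * Q).trace.re := norm_trace_conjTranspose_mul_sq_le P Q
    _ ≤ _ := by
      rw [← hQ]
      exact mul_le_mul_of_nonneg_right hP (re_trace_conjTranspose_mul_self_nonneg Q)

open Filter Topology in
lemma norm_trace_mul_conjTranspose_sq_le [Fintype m] [Fintype n] (Y Z : Matrix n m ℂ) :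
    ‖(Y * Zᴴ).trace‖ ^ 2 ≤ Fintype.card m * ((Y * Zᴴ)ᴴ * (Y * Zᴴ)).trace.re := by
  set F := ((Y * Zᴴ)ᴴ * (Y * Zᴴ)).trace.re
  set G := (Yᴴ * Y).trace.re
  have hlim : Tendsto (fun ε : ℝ => Fintype.card m * (F + ε * G)) (𝓝[>] 0)
      (𝓝 (Fintype.card m * (F + 0 * G))) :=
    (Continuous.tendsto (by fun_prop) 0).mono_left nhdsWithin_le_nhds
  simpa using ge_of_tendsto hlim (eventually_nhdsWithin_of_forall fun ε hε =>
    norm_trace_mul_conjTranspose_sq_le_add Y Z hε)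

lemma star_vec_dotProduct_partialTrace_kronecker_sub_smul_mulVec_vec [Fintype m] [Fintype n]
    [DecidableEq n] (c : ℂ) (Y Z : Matrix n m ℂ) :
    star (vec Y) ⬝ᵥ (partialTrace (vecMulVec (vec Z) (star (vec Z))) ⊗ₖ 1
        - c • vecMulVec (vec Z) (star (vec Z))) *ᵥ vec Y
      = (Yᴴ * Y * (Zᴴ * Z)).trace - c * (‖(Zᴴ * Y).trace‖ ^ 2 : ℝ) := by
  rw [sub_mulVec, dotProduct_sub, smul_mulVec, dotProduct_smul, smul_eq_mul,
    star_dotProduct_vecMulVec_mulVec, star_vec_dotProduct_vec, partialTrace_vecMulVec_vec,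
    star_vec_dotProduct_kronecker_one_mulVec_vec, transpose_transpose]

lemma posSemidef_partialTrace_kronecker_sub_smul_vecMulVec [Fintype m] [Fintype n]
    [DecidableEq n] {μ : ℝ} (hμ : μ * Fintype.card m ≤ 1) (Z : Matrix n m ℂ) :
    (partialTrace (vecMulVec (vec Z) (star (vec Z))) ⊗ₖ 1
      - (μ : ℂ) • vecMulVec (vec Z) (star (vec Z))).PosSemidef := by
  refine .of_dotProduct_mulVec_nonneg ?_ fun v => ?_
  · rw [partialTrace_vecMulVec_vec]
    exact ((posSemidef_conjTranspose_mul_self Z).transpose.kronecker PosSemidef.one).isHermitian.sub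
      ((posSemidef_vecMulVec_self_star _).isHermitian.smul (Complex.conj_ofReal μ))
  obtain ⟨Y, rfl⟩ : ∃ Y : Matrix n m ℂ, vec Y = v := ⟨of fun i q => v (q, i), rfl⟩
  have hT := Complex.nonneg_iff.mp (posSemidef_conjTranspose_mul_self (Y * Zᴴ)).trace_nonneg
  have hkey := norm_trace_mul_conjTranspose_sq_le Y Z
  rw [trace_conjTranspose_mul_self_mul_conjTranspose] at hT hkey
  rw [star_vec_dotProduct_partialTrace_kronecker_sub_smul_mulVec_vec, trace_mul_comm Zᴴ,
    Complex.nonneg_iff]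
  simp only [Complex.sub_re, Complex.sub_im, ← Complex.ofReal_mul, Complex.ofReal_re,
    Complex.ofReal_im]
  refine ⟨?_, by linarith [hT.2]⟩
  rcases le_or_gt μ 0 with hμ0 | hμ0
  · nlinarith [sq_nonneg ‖(Y * Zᴴ).trace‖]
  · nlinarith [mul_le_mul_of_nonneg_left hkey hμ0.le, mul_le_mul_of_nonneg_right hμ hT.1]

lemma posSemidef_partialTrace_kronecker_sub_smul [Fintype m] [Fintype n] [DecidableEq n]
    {μ : ℝ} (hμ : μ * Fintype.card m ≤ 1) {σ : Matrix (m × n) (m × n) ℂ} (hσ : σ.PosSemidef) :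
    (partialTrace σ ⊗ₖ 1 - (μ : ℂ) • σ).PosSemidef := by
  obtain ⟨r, ψ, rfl⟩ := posSemidef_iff_eq_sum_vecMulVec.mp hσ
  rw [partialTrace_sum, sum_kronecker, Finset.smul_sum, ← Finset.sum_sub_distrib]
  exact posSemidef_sum _ fun j _ =>
    posSemidef_partialTrace_kronecker_sub_smul_vecMulVec hμ (of fun i q => ψ j (q, i))

lemma one_submatrix_conjTranspose_mul_self [NonAssocSemiring R] [StarRing R] [Fintype n]
    [DecidableEq m] [DecidableEq n] (e : m ↪ n) :
    ((1 : Matrix n n R).submatrix id e)ᴴ * (1 : Matrix n n R).submatrix id e = 1 := by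
  ext p q
  simp [mul_apply, one_apply]

lemma mul_card_le_one_of_posSemidef_partialTrace_kronecker_sub_smul [Fintype m] [Fintype n]
    [DecidableEq n] (e : m ↪ n) {μ : ℝ}
    (h : ∀ σ : Matrix (m × n) (m × n) ℂ,
      σ.PosSemidef → (partialTrace σ ⊗ₖ 1 - (μ : ℂ) • σ).PosSemidef) :
    μ * Fintype.card m ≤ 1 := by
  classical
  set Z := (1 : Matrix n n ℂ).submatrix id e
  have hψ := (h _ (posSemidef_vecMulVec_self_star (vec Z))).dotProduct_mulVec_nonneg (vec Z)
  rw [star_vec_dotProduct_partialTrace_kronecker_sub_smul_mulVec_vec,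
    one_submatrix_conjTranspose_mul_self, Matrix.one_mul, trace_one, Complex.norm_natCast] at hψ
  have hreal : (0 : ℝ) ≤ Fintype.card m - μ * Fintype.card m ^ 2 := by exact_mod_cast hψ
  rcases (Nat.zero_le (Fintype.card m)).eq_or_lt with hm | hm
  · simp [← hm]
  · nlinarith [(Nat.cast_pos (α := ℝ)).mpr hm]

theorem posSemidef_partialTrace_kronecker_sub_smul_iff [Fintype m] [Fintype n] [DecidableEq n]
    (e : m ↪ n) {μ : ℝ} :
    (∀ σ : Matrix (m × n) (m × n) ℂ,
        σ.PosSemidef → (partialTrace σ ⊗ₖ 1 - (μ : ℂ) • σ).PosSemidef)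
      ↔ μ * Fintype.card m ≤ 1 :=
  ⟨mul_card_le_one_of_posSemidef_partialTrace_kronecker_sub_smul e,
    fun hμ _ => posSemidef_partialTrace_kronecker_sub_smul hμ⟩

end Matrix

lemma idTensor_trace_smul_one_sub_smul (k d : ℕ) (c : ℂ)
    (σ : Matrix (Fin k × Fin d) (Fin k × Fin d) ℂ) :
    idTensor k d (fun τ => τ.trace • (1 : Matrix (Fin d) (Fin d) ℂ) - c • τ) σ
      = partialTrace σ ⊗ₖ 1 - c • σ := by
  ext ⟨p, i⟩ ⟨q, j⟩
  simp [idTensor, partialTrace, kroneckerMap_apply, trace]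

theorem lambda_mu_kPositive_iff_general (d k : ℕ) (hk : 1 ≤ k) (hkd : k ≤ d)
    (μ : ℝ) :
    kPositive k d
        (fun σ => σ.trace • (1 : Matrix (Fin d) (Fin d) ℂ) - (μ : ℂ) • σ)
      ↔ μ ≤ 1 / k := by
  have hk0 : (0 : ℝ) < k := by exact_mod_cast hk
  rw [le_div_iff₀ hk0]
  simpa only [kPositive, idTensor_trace_smul_one_sub_smul, Fintype.card_fin] using
    posSemidef_partialTrace_kronecker_sub_smul_iff (Fin.castLEEmb hkd) (μ := μ)

/-- for μ ≥ 0 and 1 ≤ k ≤ d, the map Λ_μ(σ) = Tr(σ) I − μ σ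
is k-positive iff μ ≤ 1/k. -/
theorem lambda_mu_kPositive_iff (d k : ℕ) (hk : 1 ≤ k) (hkd : k ≤ d)
    (μ : ℝ) (hμ : 0 ≤ μ) :
    kPositive k d
        (fun σ => σ.trace • (1 : Matrix (Fin d) (Fin d) ℂ) - (μ : ℂ) • σ)
      ↔ μ ≤ 1 / k :=
  lambda_mu_kPositive_iff_general d k hk hkd μ
end
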